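/- Let F : ℝⁿ → ℝⁿ be a C¹ map with n ≥ 2. Suppose that for every x ∈ ℝⁿ no complex eigenvalue of JF(x) is zero, that every eigenvalue of JF(x)+JF(x)^T is positive for every x, and that there exist M₁, M₂ > 0 such that for every x ∈ ℝⁿ the trace of JF(x)+JF(x)^T is less than M₁ and its determinant is greater than M₂. Then F is injective. -/

import Mathlib

/-! Since the symmetric part `JF(x) + JF(x)ᵀ` is positive definite, `⟪JF(x) v, v⟫ > 0` for every
`v ≠ 0`. Hence for `a ≠ b` the function `t ↦ ⟪F (b + t (a - b)), a - b⟫` is strictly increasing,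
so `⟪F a - F b, a - b⟫ > 0` and `F a ≠ F b`. -/

open Matrix

/-- The Jacobian matrix of a map `F : ℝⁿ → ℝⁿ` at a point `x`:
the matrix of the total (Fréchet) derivative of `F` at `x` in the standard basis. -/
noncomputable def jacobianMatrix {n : ℕ} (F : (Fin n → ℝ) → (Fin n → ℝ)) (x : Fin n → ℝ) :
    Matrix (Fin n) (Fin n) ℝ :=
  LinearMap.toMatrix' (fderiv ℝ F x).toLinearMap

/-- `μ : ℂ` is a (complex) eigenvalue of the real matrix `A`. -/
def HasComplexEigenvalue {n : ℕ} (A : Matrix (Fin n) (Fin n) ℝ) (μ : ℂ) : Prop :=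
  ∃ v : Fin n → ℂ, v ≠ 0 ∧ (A.map Complex.ofReal).mulVec v = μ • v

/-- `μ : ℝ` is a (real) eigenvalue of the real matrix `A`. -/
def HasRealEigenvalue {n : ℕ} (A : Matrix (Fin n) (Fin n) ℝ) (μ : ℝ) : Prop :=
  ∃ v : Fin n → ℝ, v ≠ 0 ∧ A.mulVec v = μ • v

theorem Matrix.IsHermitian.posDef_of_hasRealEigenvalue_pos {n : ℕ}
    {A : Matrix (Fin n) (Fin n) ℝ} (hA : A.IsHermitian)
    (hpos : ∀ μ, HasRealEigenvalue A μ → 0 < μ) : A.PosDef :=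
  hA.posDef_iff_eigenvalues_pos.mpr fun i =>
    hpos _ ⟨hA.eigenvectorBasis i, by simpa using hA.eigenvectorBasis.orthonormal.ne_zero i,
      hA.mulVec_eigenvectorBasis i⟩

theorem Matrix.dotProduct_add_transpose_mulVec_self {ι R : Type*} [Fintype ι] [CommSemiring R]
    (A : Matrix ι ι R) (v : ι → R) :
    v ⬝ᵥ (A + Aᵀ) *ᵥ v = 2 * (A *ᵥ v ⬝ᵥ v) := by
  rw [add_mulVec, dotProduct_add, mulVec_transpose, dotProduct_comm v (v ᵥ* A),
    ← dotProduct_mulVec, dotProduct_comm v, two_mul]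

theorem jacobianMatrix_mulVec {n : ℕ} (F : (Fin n → ℝ) → (Fin n → ℝ)) (x v : Fin n → ℝ) :
    jacobianMatrix F x *ᵥ v = fderiv ℝ F x v := by
  rw [jacobianMatrix, ← Matrix.toLin'_apply, Matrix.toLin'_toMatrix']
  rfl

theorem hasDerivAt_dotProduct_comp_line {ι : Type*} [Fintype ι] {F : (ι → ℝ) → (ι → ℝ)}
    {b v : ι → ℝ} {t : ℝ} (hF : DifferentiableAt ℝ F (b + t • v)) :
    HasDerivAt (fun s : ℝ => F (b + s • v) ⬝ᵥ v) (fderiv ℝ F (b + t • v) v ⬝ᵥ v) t := by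
  have hline : HasDerivAt (fun s : ℝ => b + s • v) v t := by
    simpa using ((hasDerivAt_id t).smul_const v).const_add b
  have hFline := hF.hasFDerivAt.comp_hasDerivAt t hline
  exact (LinearMap.toContinuousLinearMap ((dotProductBilin ℝ ℝ).flip v)).hasFDerivAt
    |>.comp_hasDerivAt t hFline

theorem sub_dotProduct_sub_pos_of_fderiv_dotProduct_pos {ι : Type*} [Fintype ι]
    {F : (ι → ℝ) → (ι → ℝ)} (hF : Differentiable ℝ F)
    (hmono : ∀ x v, v ≠ 0 → 0 < fderiv ℝ F x v ⬝ᵥ v) {a b : ι → ℝ} (hab : a ≠ b) :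
    0 < (F a - F b) ⬝ᵥ (a - b) := by
  set v := a - b
  have hv : v ≠ 0 := sub_ne_zero.mpr hab
  have hstrict : StrictMono fun s : ℝ => F (b + s • v) ⬝ᵥ v :=
    strictMono_of_deriv_pos fun t => by
      rw [(hasDerivAt_dotProduct_comp_line (hF _)).deriv]
      exact hmono _ v hv
  have h01 := hstrict zero_lt_one
  simp only [zero_smul, add_zero, one_smul, v, add_sub_cancel] at h01
  rwa [sub_dotProduct, sub_pos]

theorem injective_of_fderiv_dotProduct_pos {ι : Type*} [Fintype ι]
    {F : (ι → ℝ) → (ι → ℝ)} (hF : Differentiable ℝ F)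
    (hmono : ∀ x v, v ≠ 0 → 0 < fderiv ℝ F x v ⬝ᵥ v) : Function.Injective F := by
  intro a b hFab
  by_contra hab
  simpa [hFab] using sub_dotProduct_sub_pos_of_fderiv_dotProduct_pos hF hmono hab

theorem injective_of_positive_symmetric_spec_trace_det_bounds_general
    {n : ℕ} (F : (Fin n → ℝ) → (Fin n → ℝ)) (hF : ContDiff ℝ 1 F)
    (hpos : ∀ x : Fin n → ℝ, ∀ μ : ℝ,
        HasRealEigenvalue (jacobianMatrix F x + (jacobianMatrix F x)ᵀ) μ → 0 < μ) :
    Function.Injective F := by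
  refine injective_of_fderiv_dotProduct_pos (hF.differentiable one_ne_zero) fun x v hv => ?_
  have hsymm : (jacobianMatrix F x + (jacobianMatrix F x)ᵀ).IsHermitian := by
    simpa [conjTranspose_eq_transpose_of_trivial] using
      isHermitian_add_transpose_self (jacobianMatrix F x)
  have hquad := (hsymm.posDef_of_hasRealEigenvalue_pos (hpos x)).dotProduct_mulVec_pos hv
  rw [star_trivial, dotProduct_add_transpose_mulVec_self, jacobianMatrix_mulVec] at hquad
  exact pos_of_mul_pos_right hquad zero_le_two

/-- Let `F : ℝⁿ → ℝⁿ` (n ≥ 2) be `C¹` with no complex eigenvalue of `JF(x)`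
equal to zero for any `x`. Suppose every eigenvalue of `JF(x)+JF(x)ᵀ` is positive for every
`x`, and there are `M₁, M₂ > 0` such that for every `x` the trace of `JF(x)+JF(x)ᵀ` is
less than `M₁` and its determinant is greater than `M₂`. Then `F` is injective. -/
theorem injective_of_positive_symmetric_spec_trace_det_bounds
    {n : ℕ} (hn : 2 ≤ n) (F : (Fin n → ℝ) → (Fin n → ℝ)) (hF : ContDiff ℝ 1 F)
    (hspec : ∀ x : Fin n → ℝ, ∀ μ : ℂ, HasComplexEigenvalue (jacobianMatrix F x) μ → μ ≠ 0)
    (hpos : ∀ x : Fin n → ℝ, ∀ μ : ℝ,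
        HasRealEigenvalue (jacobianMatrix F x + (jacobianMatrix F x)ᵀ) μ → 0 < μ)
    (hbound : ∃ M₁ > (0 : ℝ), ∃ M₂ > (0 : ℝ), ∀ x : Fin n → ℝ,
        (jacobianMatrix F x + (jacobianMatrix F x)ᵀ).trace < M₁ ∧
        M₂ < (jacobianMatrix F x + (jacobianMatrix F x)ᵀ).det) :
    Function.Injective F :=
  injective_of_positive_symmetric_spec_trace_det_bounds_general F hF hpos
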